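/- Let Q* be a fixed point of the Bellman operator F, let π* be a greedy policy with respect to Q*, let ε > 0 satisfy γ + ε < 1, and let M = Σ_{k=0}^∞ (γ+ε)^{−2k} (A_{π*}ᵏ)ᵀ A_{π*}ᵏ. If Q₀ ≤ Q* entrywise, then for every k ≥ 0 the value iteration iterates Q_k = F^k Q₀ satisfy ‖Q_k − Q*‖_M ≤ (γ+ε)^k ‖Q₀ − Q*‖_M, where ‖x‖_M = √(xᵀ M x). -/

import Mathlib

/-!
Write `B = A_{π*}` and `β = γ + ε`. Greediness of `π*` gives `F Q* - F Q ≤ B (Q* - Q)` for every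
`Q`, and `F` is monotone, so the errors `Q* - Q_k` stay nonnegative and are dominated by
`Bᵏ (Q* - Q₀)`. As `B ≥ 0`, `0 ≤ u ≤ Bᵏ v` gives `0 ≤ Bʲ u ≤ Bʲ⁺ᵏ v`, so in
`xᵀ M x = ∑ⱼ β^{-2j} |Bʲ x|²` the series for `u` is bounded by `β^{2k}` times a tail of the series
for `v`. The series for `M` converges because `B` is `γ` times a row-stochastic matrix and `γ < β`.
-/

open Finset Matrix

/-- The Bellman operator `F` for a discounted MDP:
`(F Q)(s,a) = R(s,a) + γ * Σ_{s'} P(s'|s,a) * max_{a'} Q(s',a')`. -/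
noncomputable def bellman {S A : Type*} [Fintype S] [Fintype A] [Nonempty A]
    (γ : ℝ) (P : S → A → S → ℝ) (R : S → A → ℝ) (Q : S × A → ℝ) : S × A → ℝ :=
  fun p =>
    R p.1 p.2 +
      γ * ∑ s' : S, P p.1 p.2 s' * Finset.univ.sup' Finset.univ_nonempty (fun a' => Q (s', a'))

/-- The matrix of the linear map `A_π` on `ℝ^{S×A}` associated with a deterministic
policy `π : S → A`: `(A_π x)(s,a) = γ * Σ_{s'} P(s'|s,a) * x(s', π(s'))`.
Its entry at row `(s,a)`, column `(s',a')` is `γ * P(s'|s,a)` if `a' = π s'`, else `0`. -/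
noncomputable def polMat {S A : Type*} [Fintype S] [Fintype A] [DecidableEq A]
    (γ : ℝ) (P : S → A → S → ℝ) (π : S → A) : Matrix (S × A) (S × A) ℝ :=
  Matrix.of fun p q => if q.2 = π q.1 then γ * P p.1 p.2 q.1 else 0

theorem HasSum.dotProduct_mulVec {ι n R : Type*} [Fintype n] [CommSemiring R]
    [TopologicalSpace R] [IsTopologicalSemiring R] {f : ι → Matrix n n R} {M : Matrix n n R}
    (hf : HasSum f M) (x y : n → R) : HasSum (fun k => x ⬝ᵥ f k *ᵥ y) (x ⬝ᵥ M *ᵥ y) := by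
  simp only [dotProduct, mulVec, Finset.mul_sum]
  exact hasSum_sum fun p _ => hasSum_sum fun q _ =>
    ((Pi.hasSum.1 (Pi.hasSum.1 hf p) q).mul_right (y q)).mul_left (x p)

namespace Matrix

variable {n : Type*} [Fintype n]

theorem dotProduct_smul_transpose_mul_mulVec (c : ℝ) (C : Matrix n n ℝ) (x : n → ℝ) :
    x ⬝ᵥ (c • (Cᵀ * C)) *ᵥ x = c * (C *ᵥ x ⬝ᵥ C *ᵥ x) := by
  rw [smul_mulVec, dotProduct_smul, smul_eq_mul, ← mulVec_mulVec, dotProduct_mulVec,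
    vecMul_transpose]

theorem neg_dotProduct_mulVec_neg (M : Matrix n n ℝ) (x : n → ℝ) :
    -x ⬝ᵥ M *ᵥ -x = x ⬝ᵥ M *ᵥ x := by
  rw [mulVec_neg, dotProduct_neg, neg_dotProduct, neg_neg]

theorem mulVec_mono_of_nonneg {B : Matrix n n ℝ} (hB : ∀ i j, 0 ≤ B i j) {x y : n → ℝ}
    (hxy : x ≤ y) : B *ᵥ x ≤ B *ᵥ y := fun i =>
  Finset.sum_le_sum fun j _ => mul_le_mul_of_nonneg_left (hxy j) (hB i j)

theorem dotProduct_self_le_of_nonneg_of_le {x y : n → ℝ} (hx : 0 ≤ x) (hxy : x ≤ y) :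
    x ⬝ᵥ x ≤ y ⬝ᵥ y :=
  Finset.sum_le_sum fun i _ => mul_self_le_mul_self (hx i) (hxy i)

variable [DecidableEq n]

theorem summable_weightedGram_of_mem_rowStochastic {S : Matrix n n ℝ}
    (hS : S ∈ rowStochastic ℝ n) {γ β : ℝ} (hγ : 0 ≤ γ) (hγβ : γ < β) :
    Summable fun k : ℕ => (β⁻¹ ^ (2 * k)) • (((γ • S) ^ k)ᵀ * (γ • S) ^ k) := by
  have hβ : 0 < β := hγ.trans_lt hγβ
  set r := (γ / β) ^ 2
  have hr : r < 1 := pow_lt_one₀ (div_nonneg hγ hβ.le) ((div_lt_one hβ).2 hγβ) two_ne_zero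
  have hterm : ∀ k : ℕ, (β⁻¹ ^ (2 * k)) • (((γ • S) ^ k)ᵀ * (γ • S) ^ k)
      = r ^ k • ((S ^ k)ᵀ * S ^ k) := by
    intro k
    rw [smul_pow, transpose_smul, smul_mul_smul_comm, smul_smul, ← mul_pow, pow_mul, ← mul_pow]
    congr 2
    ring
  have hbound : ∀ (k : ℕ) (p q : n), 0 ≤ ((S ^ k)ᵀ * S ^ k) p q ∧
      ((S ^ k)ᵀ * S ^ k) p q ≤ Fintype.card n := by
    intro k p q
    have hSk := pow_mem hS k
    rw [mul_apply]
    refine ⟨Finset.sum_nonneg fun s _ => mul_nonneg (nonneg_of_mem_rowStochastic hSk)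
      (nonneg_of_mem_rowStochastic hSk), ?_⟩
    calc ∑ s, (S ^ k)ᵀ p s * (S ^ k) s q ≤ ∑ _s : n, (1 : ℝ) :=
          Finset.sum_le_sum fun s _ => mul_le_one₀ (le_one_of_mem_rowStochastic hSk)
            (nonneg_of_mem_rowStochastic hSk) (le_one_of_mem_rowStochastic hSk)
      _ = Fintype.card n := by simp
  simp_rw [hterm]
  refine Pi.summable.2 fun p => Pi.summable.2 fun q => ?_
  refine Summable.of_nonneg_of_le (fun k => ?_) (fun k => ?_)
    ((summable_geometric_of_lt_one (sq_nonneg _) hr).mul_right (Fintype.card n : ℝ))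
  · exact mul_nonneg (pow_nonneg (sq_nonneg _) k) (hbound k p q).1
  · exact mul_le_mul_of_nonneg_left (hbound k p q).2 (pow_nonneg (sq_nonneg _) k)

variable {B M : Matrix n n ℝ} {β : ℝ}

theorem hasSum_weightedGram_dotProduct_mulVec
    (hM : HasSum (fun k : ℕ => (β⁻¹ ^ (2 * k)) • ((B ^ k)ᵀ * B ^ k)) M) (x : n → ℝ) :
    HasSum (fun k : ℕ => β⁻¹ ^ (2 * k) * (B ^ k *ᵥ x ⬝ᵥ B ^ k *ᵥ x)) (x ⬝ᵥ M *ᵥ x) := by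
  simpa only [dotProduct_smul_transpose_mul_mulVec] using hM.dotProduct_mulVec x x

theorem dotProduct_mulVec_le_of_le_pow_mulVec (hβ : 0 < β) (hB : ∀ i j, 0 ≤ B i j)
    (hM : HasSum (fun k : ℕ => (β⁻¹ ^ (2 * k)) • ((B ^ k)ᵀ * B ^ k)) M)
    {u v : n → ℝ} {k : ℕ} (hu : 0 ≤ u) (huv : u ≤ B ^ k *ᵥ v) :
    u ⬝ᵥ M *ᵥ u ≤ β ^ (2 * k) * (v ⬝ᵥ M *ᵥ v) := by
  set g : ℕ → ℝ := fun i => β⁻¹ ^ (2 * i) * (B ^ i *ᵥ v ⬝ᵥ B ^ i *ᵥ v)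
  have hg : HasSum g (v ⬝ᵥ M *ᵥ v) := hasSum_weightedGram_dotProduct_mulVec hM v
  have hg0 : ∀ i, 0 ≤ g i := fun i =>
    mul_nonneg (by positivity) (Finset.sum_nonneg fun _ _ => mul_self_nonneg _)
  have hterm : ∀ j, β⁻¹ ^ (2 * j) * (B ^ j *ᵥ u ⬝ᵥ B ^ j *ᵥ u) ≤ β ^ (2 * k) * g (j + k) := by
    intro j
    have hle : B ^ j *ᵥ u ≤ B ^ (j + k) *ᵥ v := by
      rw [pow_add, ← mulVec_mulVec]
      exact mulVec_mono_of_nonneg (pow_apply_nonneg hB j) huv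
    have h0 : 0 ≤ B ^ j *ᵥ u := by
      simpa only [mulVec_zero] using mulVec_mono_of_nonneg (pow_apply_nonneg hB j) hu
    calc β⁻¹ ^ (2 * j) * (B ^ j *ᵥ u ⬝ᵥ B ^ j *ᵥ u)
        ≤ β⁻¹ ^ (2 * j) * (B ^ (j + k) *ᵥ v ⬝ᵥ B ^ (j + k) *ᵥ v) := by
          gcongr
          exact dotProduct_self_le_of_nonneg_of_le h0 hle
      _ = β ^ (2 * k) * g (j + k) := by
          simp only [g, mul_add, pow_add, inv_pow]
          field_simp
  calc u ⬝ᵥ M *ᵥ u ≤ β ^ (2 * k) * ∑' j, g (j + k) :=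
        hasSum_le hterm (hasSum_weightedGram_dotProduct_mulVec hM u)
          (((summable_nat_add_iff k).2 hg.summable).hasSum.mul_left _)
    _ ≤ β ^ (2 * k) * (v ⬝ᵥ M *ᵥ v) := by
        gcongr
        rw [← hg.tsum_eq]
        exact ((summable_nat_add_iff k).2 hg.summable).tsum_le_tsum_of_inj (· + k)
          (add_left_injective k) (fun i _ => hg0 i) (fun _ => le_rfl) hg.summable

theorem sqrt_dotProduct_mulVec_le_of_le_pow_mulVec (hβ : 0 < β) (hB : ∀ i j, 0 ≤ B i j)
    (hM : HasSum (fun k : ℕ => (β⁻¹ ^ (2 * k)) • ((B ^ k)ᵀ * B ^ k)) M)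
    {u v : n → ℝ} {k : ℕ} (hu : 0 ≤ u) (huv : u ≤ B ^ k *ᵥ v) :
    √(u ⬝ᵥ M *ᵥ u) ≤ β ^ k * √(v ⬝ᵥ M *ᵥ v) := by
  calc √(u ⬝ᵥ M *ᵥ u) ≤ √(β ^ (2 * k) * (v ⬝ᵥ M *ᵥ v)) :=
        Real.sqrt_le_sqrt (dotProduct_mulVec_le_of_le_pow_mulVec hβ hB hM hu huv)
    _ = β ^ k * √(v ⬝ᵥ M *ᵥ v) := by
        rw [Real.sqrt_mul (by positivity), pow_mul', Real.sqrt_sq (by positivity)]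

end Matrix

section MDP

variable {S A : Type*} [Fintype S] [Fintype A] {γ : ℝ} {P : S → A → S → ℝ}

theorem polMat_mulVec_apply [DecidableEq A] (π : S → A) (x : S × A → ℝ) (p : S × A) :
    (polMat γ P π *ᵥ x) p = γ * ∑ s', P p.1 p.2 s' * x (s', π s') := by
  simp only [mulVec, dotProduct, polMat, of_apply, Fintype.sum_prod_type, ite_mul, zero_mul,
    Finset.sum_ite_eq', Finset.mem_univ, if_true, Finset.mul_sum, mul_assoc]

theorem polMat_nonneg [DecidableEq A] (hγ : 0 ≤ γ) (hP : ∀ s a s', 0 ≤ P s a s') (π : S → A)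
    (p q : S × A) : 0 ≤ polMat γ P π p q := by
  simp only [polMat, of_apply]
  split_ifs
  exacts [mul_nonneg hγ (hP _ _ _), le_rfl]

theorem polMat_eq_smul [DecidableEq A] (π : S → A) : polMat γ P π = γ • polMat 1 P π := by
  ext p q
  simp [polMat]

theorem polMat_one_mem_rowStochastic [DecidableEq S] [DecidableEq A]
    (hP0 : ∀ s a s', 0 ≤ P s a s') (hP1 : ∀ s a, ∑ s', P s a s' = 1) (π : S → A) :
    polMat 1 P π ∈ rowStochastic ℝ (S × A) := by
  refine mem_rowStochastic_iff_sum.2 ⟨polMat_nonneg zero_le_one hP0 π, fun p => ?_⟩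
  simpa [polMat, Fintype.sum_prod_type] using hP1 p.1 p.2

variable [Nonempty A] {R : S → A → ℝ}

theorem bellman_mono (hγ : 0 ≤ γ) (hP : ∀ s a s', 0 ≤ P s a s') : Monotone (bellman γ P R) := by
  intro Q Q' hQ p
  unfold bellman
  gcongr with s' _ a _
  · exact hP _ _ _
  · exact hQ (s', a)

theorem bellman_sub_bellman_le_polMat_mulVec [DecidableEq A] (hγ : 0 ≤ γ)
    (hP : ∀ s a s', 0 ≤ P s a s') {Q' : S × A → ℝ} {π : S → A}
    (hπ : ∀ s, Q' (s, π s) = Finset.univ.sup' Finset.univ_nonempty (fun a => Q' (s, a)))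
    (Q : S × A → ℝ) : bellman γ P R Q' - bellman γ P R Q ≤ polMat γ P π *ᵥ (Q' - Q) := by
  intro p
  rw [polMat_mulVec_apply]
  simp only [Pi.sub_apply, bellman, add_sub_add_left_eq_sub, ← mul_sub, ← Finset.sum_sub_distrib]
  gcongr with s' _
  · exact hP _ _ _
  · exact (hπ s').ge
  · exact Finset.le_sup' (fun a => Q (s', a)) (Finset.mem_univ _)

theorem iterate_bellman_le_of_le_fixedPoint (hγ : 0 ≤ γ) (hP : ∀ s a s', 0 ≤ P s a s')
    {Qstar Q₀ : S × A → ℝ} (hfix : bellman γ P R Qstar = Qstar) (hQ₀ : Q₀ ≤ Qstar) (k : ℕ) :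
    (bellman γ P R)^[k] Q₀ ≤ Qstar :=
  ((bellman_mono hγ hP).iterate k hQ₀).trans_eq (Function.iterate_fixed hfix k)

theorem sub_iterate_bellman_le_pow_mulVec [DecidableEq S] [DecidableEq A] (hγ : 0 ≤ γ)
    (hP : ∀ s a s', 0 ≤ P s a s') {Qstar : S × A → ℝ} (hfix : bellman γ P R Qstar = Qstar)
    {π : S → A}
    (hπ : ∀ s, Qstar (s, π s) = Finset.univ.sup' Finset.univ_nonempty (fun a => Qstar (s, a)))
    (Q₀ : S × A → ℝ) (k : ℕ) :
    Qstar - (bellman γ P R)^[k] Q₀ ≤ polMat γ P π ^ k *ᵥ (Qstar - Q₀) := by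
  induction k with
  | zero => simp
  | succ k ih =>
    calc Qstar - (bellman γ P R)^[k + 1] Q₀
        = bellman γ P R Qstar - bellman γ P R ((bellman γ P R)^[k] Q₀) := by
          rw [Function.iterate_succ_apply', hfix]
      _ ≤ polMat γ P π *ᵥ (Qstar - (bellman γ P R)^[k] Q₀) :=
          bellman_sub_bellman_le_polMat_mulVec hγ hP hπ _
      _ ≤ polMat γ P π *ᵥ (polMat γ P π ^ k *ᵥ (Qstar - Q₀)) :=
          mulVec_mono_of_nonneg (polMat_nonneg hγ hP π) ih
      _ = polMat γ P π ^ (k + 1) *ᵥ (Qstar - Q₀) := by rw [mulVec_mulVec, pow_succ']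

end MDP

theorem stmt14_general {S A : Type*} [Fintype S] [Fintype A] [Nonempty A]
    [DecidableEq S] [DecidableEq A]
    (γ ε : ℝ) (hγ0 : 0 ≤ γ) (hε : 0 < ε)
    (P : S → A → S → ℝ) (hP0 : ∀ s a s', 0 ≤ P s a s')
    (hP1 : ∀ s a, ∑ s' : S, P s a s' = 1)
    (R : S → A → ℝ)
    (Qstar : S × A → ℝ) (hfix : bellman γ P R Qstar = Qstar)
    (πstar : S → A)
    (hgreedy : ∀ s : S,
      Qstar (s, πstar s) = Finset.univ.sup' Finset.univ_nonempty (fun a => Qstar (s, a)))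
    (M : Matrix (S × A) (S × A) ℝ)
    (hM : M = ∑' k : ℕ,
      ((γ + ε)⁻¹ ^ (2 * k)) • ((polMat γ P πstar ^ k)ᵀ * polMat γ P πstar ^ k))
    (Q₀ : S × A → ℝ) (hQ₀ : Q₀ ≤ Qstar) :
    ∀ k : ℕ,
      Real.sqrt (((bellman γ P R)^[k] Q₀ - Qstar) ⬝ᵥ
          M.mulVec ((bellman γ P R)^[k] Q₀ - Qstar)) ≤
        (γ + ε) ^ k * Real.sqrt ((Q₀ - Qstar) ⬝ᵥ M.mulVec (Q₀ - Qstar)) := by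
  intro k
  have hMsum : HasSum (fun k : ℕ =>
      ((γ + ε)⁻¹ ^ (2 * k)) • ((polMat γ P πstar ^ k)ᵀ * polMat γ P πstar ^ k)) M := by
    rw [hM, polMat_eq_smul]
    exact (summable_weightedGram_of_mem_rowStochastic
      (polMat_one_mem_rowStochastic hP0 hP1 πstar) hγ0 (by linarith)).hasSum
  rw [← neg_sub Qstar, ← neg_sub Qstar Q₀, neg_dotProduct_mulVec_neg, neg_dotProduct_mulVec_neg]
  exact sqrt_dotProduct_mulVec_le_of_le_pow_mulVec (by linarith) (polMat_nonneg hγ0 hP0 πstar)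
    hMsum (sub_nonneg.2 (iterate_bellman_le_of_le_fixedPoint hγ0 hP0 hfix hQ₀ k))
    (sub_iterate_bellman_le_pow_mulVec hγ0 hP0 hfix hgreedy Q₀ k)

/-- weighted-Euclidean-norm exponential convergence on the shifted orthant:
under the setting of STATEMENT 13, if `Q₀ ≤ Q*` entrywise, then for all `k ≥ 0`,
`‖F^k Q₀ − Q*‖_M ≤ (γ+ε)^k ‖Q₀ − Q*‖_M`, where `‖x‖_M = √(xᵀ M x)`. -/
theorem stmt14 {S A : Type*} [Fintype S] [Fintype A] [Nonempty S] [Nonempty A]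
    [DecidableEq S] [DecidableEq A]
    (γ ε : ℝ) (hγ0 : 0 ≤ γ) (hγ1 : γ < 1) (hε : 0 < ε) (hγε : γ + ε < 1)
    (P : S → A → S → ℝ) (hP0 : ∀ s a s', 0 ≤ P s a s')
    (hP1 : ∀ s a, ∑ s' : S, P s a s' = 1)
    (R : S → A → ℝ)
    (Qstar : S × A → ℝ) (hfix : bellman γ P R Qstar = Qstar)
    (πstar : S → A)
    (hgreedy : ∀ s : S,
      Qstar (s, πstar s) = Finset.univ.sup' Finset.univ_nonempty (fun a => Qstar (s, a)))
    (M : Matrix (S × A) (S × A) ℝ)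
    (hM : M = ∑' k : ℕ,
      ((γ + ε)⁻¹ ^ (2 * k)) • ((polMat γ P πstar ^ k)ᵀ * polMat γ P πstar ^ k))
    (Q₀ : S × A → ℝ) (hQ₀ : Q₀ ≤ Qstar) :
    ∀ k : ℕ,
      Real.sqrt (((bellman γ P R)^[k] Q₀ - Qstar) ⬝ᵥ
          M.mulVec ((bellman γ P R)^[k] Q₀ - Qstar)) ≤
        (γ + ε) ^ k * Real.sqrt ((Q₀ - Qstar) ⬝ᵥ M.mulVec (Q₀ - Qstar)) :=
  stmt14_general γ ε hγ0 hε P hP0 hP1 R Qstar hfix πstar hgreedy M hM Q₀ hQ₀
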